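/- arXiv:2010.12514 — 2 statements merged into one kernel-verified Lean document; each statement's English description precedes it below -/
import Mathlib

section
/- Let p be a probability density on ℝ^d with a unique maximizer θ̂, suppose the measure with density p assigns mass at least 1/2 to the closed unit ball B_1(θ̂), and suppose sup_{‖θ - θ̂‖ ≤ r} ‖∇p(θ)‖/p(θ) ≤ 1/r for some 0 < r ≤ 1. Let λ be the density of the uniform distribution on the ball B_r(θ̂). Then λ(θ)/p(θ) ≤ 2e · r^{-d} for all θ ∈ B_r(θ̂). -/
open MeasureTheory

theorem stmt2 {d : ℕ} (p : EuclideanSpace ℝ (Fin d) → ℝ)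
    (hp : ContDiff ℝ 1 p) (hp0 : ∀ θ, 0 ≤ p θ)
    (hp1 : ∫ θ, p θ = 1)
    (θhat : EuclideanSpace ℝ (Fin d))
    (hmax : ∀ θ, θ ≠ θhat → p θ < p θhat)
    (hmass : (1 : ℝ) / 2 ≤ ∫ θ in Metric.closedBall θhat 1, p θ)
    (r : ℝ) (hr0 : 0 < r) (hr1 : r ≤ 1)
    (hgrad : ∀ θ ∈ Metric.closedBall θhat r, ‖gradient p θ‖ / p θ ≤ 1 / r) :
    ∀ θ ∈ Metric.closedBall θhat r,
      ((volume (Metric.closedBall θhat r)).toReal)⁻¹ / p θ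
        ≤ 2 * Real.exp 1 / r ^ d := by
  intro θ hθ
  have hdp : Differentiable ℝ p := hp.differentiable one_ne_zero
  have hcont : Continuous p := hdp.continuous
  have hple : ∀ x, p x ≤ p θhat := by
    intro x
    by_cases h : x = θhat
    · rw [h]
    · exact (hmax x h).le
  have hInt : Integrable p := by
    by_contra h
    rw [integral_undef h] at hp1
    norm_num at hp1
  -- volume facts
  set V1 : ℝ := (volume (Metric.closedBall θhat 1)).toReal with hV1def
  have hV1pos : 0 < V1 := ENNReal.toReal_pos (Metric.measure_closedBall_pos volume θhat one_pos).ne'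
    measure_closedBall_lt_top.ne
  -- p θhat is not too small
  have hmass2 : (1 : ℝ) / 2 ≤ p θhat * V1 := by
    refine le_trans hmass ?_
    have : ∫ x in Metric.closedBall θhat 1, p x ≤ ∫ _x in Metric.closedBall θhat 1, p θhat := by
      apply setIntegral_mono_on hInt.integrableOn (integrableOn_const
        measure_closedBall_lt_top.ne) measurableSet_closedBall
      intro x _
      exact hple x
    simpa [smul_eq_mul, mul_comm, Measure.real, hV1def] using this
  -- pointwise bound on fderiv
  have hfd : ∀ x ∈ Metric.closedBall θhat r, ‖fderiv ℝ p x‖ ≤ p x / r := by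
    intro x hx
    have hng : ‖gradient p x‖ = ‖fderiv ℝ p x‖ :=
      (InnerProductSpace.toDual ℝ _).symm.norm_map _
    rcases eq_or_lt_of_le (hp0 x) with h0 | hpx
    · have hmin : IsLocalMin p x := Filter.Eventually.of_forall fun y => by
        rw [← h0]; exact hp0 y
      rw [hmin.fderiv_eq_zero]
      simp [← h0]
    · have := hgrad x hx
      rw [hng, div_le_div_iff₀ hpx hr0] at this
      rw [le_div_iff₀ hr0]
      linarith
  -- Gronwall along the segment
  set v := θ - θhat with hv
  have hvr : ‖v‖ ≤ r := by
    have := hθ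
    rw [Metric.mem_closedBall, dist_eq_norm] at this
    exact this
  have hline : ∀ t ∈ Set.Icc (0:ℝ) 1, θhat + t • v ∈ Metric.closedBall θhat r := by
    intro t ht
    rw [Metric.mem_closedBall, dist_eq_norm]
    have : ‖θhat + t • v - θhat‖ = |t| * ‖v‖ := by
      rw [add_sub_cancel_left, norm_smul, Real.norm_eq_abs]
    rw [this, abs_of_nonneg ht.1]
    calc t * ‖v‖ ≤ 1 * ‖v‖ := by
          apply mul_le_mul_of_nonneg_right ht.2 (norm_nonneg v)
      _ ≤ r := by rw [one_mul]; exact hvr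
  set g : ℝ → ℝ := fun t => p (θhat + t • v) * Real.exp t with hg
  have hγ : ∀ t : ℝ, HasDerivAt (fun s : ℝ => θhat + s • v) v t := by
    intro t
    simpa using ((hasDerivAt_id t).smul_const v).const_add θhat
  have hgd : ∀ t : ℝ, HasDerivAt g
      (fderiv ℝ p (θhat + t • v) v * Real.exp t + p (θhat + t • v) * Real.exp t) t := by
    intro t
    exact (((hdp _).hasFDerivAt.comp_hasDerivAt t (hγ t))).mul (Real.hasDerivAt_exp t)
  have hmono : MonotoneOn g (Set.Icc (0:ℝ) 1) := by
    apply monotoneOn_of_deriv_nonneg (convex_Icc 0 1)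
    · exact ((hcont.comp (by fun_prop)).mul Real.continuous_exp).continuousOn
    · intro t ht
      exact ((hgd t).differentiableAt).differentiableWithinAt
    · intro t ht
      rw [interior_Icc] at ht
      rw [(hgd t).deriv]
      have hmem := hline t ⟨ht.1.le, ht.2.le⟩
      have h1 : -(p (θhat + t • v)) ≤ fderiv ℝ p (θhat + t • v) v := by
        have := (fderiv ℝ p (θhat + t • v)).le_opNorm v
        have h2 : ‖fderiv ℝ p (θhat + t • v)‖ * ‖v‖ ≤ (p (θhat + t • v) / r) * r := by
          exact mul_le_mul (hfd _ hmem) hvr (norm_nonneg v) (div_nonneg (hp0 _) hr0.le)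
        rw [div_mul_cancel₀ _ hr0.ne'] at h2
        have h3 : |fderiv ℝ p (θhat + t • v) v| ≤ p (θhat + t • v) := by
          calc |fderiv ℝ p (θhat + t • v) v| = ‖fderiv ℝ p (θhat + t • v) v‖ := rfl
            _ ≤ ‖fderiv ℝ p (θhat + t • v)‖ * ‖v‖ := this
            _ ≤ _ := h2
        linarith [neg_abs_le (fderiv ℝ p (θhat + t • v) v)]
      have hexp : 0 < Real.exp t := Real.exp_pos t
      nlinarith
  have hkey : p θhat ≤ p θ * Real.exp 1 := by
    have := hmono (Set.mem_Icc.2 ⟨le_rfl, zero_le_one⟩) (Set.mem_Icc.2 ⟨zero_le_one, le_rfl⟩)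
      zero_le_one
    simpa [hg, hv] using this
  -- lower bound on p θ
  have hpθ : 1 / (2 * Real.exp 1 * V1) ≤ p θ := by
    have he : 0 < Real.exp 1 := Real.exp_pos 1
    rw [div_le_iff₀ (by positivity)]
    nlinarith [hp0 θ]
  have hpθpos : 0 < p θ := lt_of_lt_of_le (by positivity) hpθ
  -- volume scaling
  have hVr : (volume (Metric.closedBall θhat r)).toReal = r ^ d * V1 := by
    have h1 : volume (Metric.closedBall θhat r)
        = ENNReal.ofReal (r ^ (Module.finrank ℝ (EuclideanSpace ℝ (Fin d)))) *
          volume (Metric.closedBall (0 : EuclideanSpace ℝ (Fin d)) 1) :=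
      Measure.addHaar_closedBall' volume θhat hr0.le
    have h2 : volume (Metric.closedBall θhat 1)
        = ENNReal.ofReal ((1:ℝ) ^ (Module.finrank ℝ (EuclideanSpace ℝ (Fin d)))) *
          volume (Metric.closedBall (0 : EuclideanSpace ℝ (Fin d)) 1) :=
      Measure.addHaar_closedBall' volume θhat zero_le_one
    rw [hV1def, h1, h2]
    rw [ENNReal.toReal_mul, ENNReal.toReal_mul, ENNReal.toReal_ofReal (by positivity),
      ENNReal.toReal_ofReal (by positivity), finrank_euclideanSpace_fin]
    ring
  rw [hVr]
  have he : 0 < Real.exp 1 := Real.exp_pos 1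
  have hrd : (0:ℝ) < r ^ d := by positivity
  rw [div_le_div_iff₀ hpθpos hrd]
  have h5 : (r ^ d * V1)⁻¹ * r ^ d = V1⁻¹ := by
    field_simp
  rw [h5]
  rw [div_le_iff₀ (by positivity)] at hpθ
  calc V1⁻¹ = 1 / V1 := (one_div V1).symm
    _ ≤ 2 * Real.exp 1 * p θ := by
        rw [div_le_iff₀ hV1pos]
        nlinarith
end

section
/- Let (σ_n²) and (τ_n²) be positive sequences with τ_n²/σ_n² → ∞, and let (a_n), (b_n) be arbitrary real sequences. Then the total variation distance between the Gaussian measures N(a_n, σ_n²) and N(b_n, τ_n²) converges to 1 as n → ∞. -/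
open MeasureTheory Filter

noncomputable def tvDist {α : Type*} [MeasurableSpace α] (P Q : Measure α) : ℝ :=
  ⨆ A : {A : Set α // MeasurableSet A}, ((P A).toReal - (Q A).toReal)


lemma my_sqrt_atTop : Tendsto Real.sqrt atTop atTop := by
  refine tendsto_atTop_atTop.2 fun c => ⟨(max c 0)^2, fun x hx => ?_⟩
  have h := Real.sqrt_le_sqrt hx
  rw [Real.sqrt_sq (le_max_right c 0)] at h
  exact le_trans (le_max_left c 0) h

lemma my_term_le_one {P Q : Measure ℝ} [IsProbabilityMeasure P] [IsProbabilityMeasure Q]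
    (A : Set ℝ) : ((P A).toReal - (Q A).toReal) ≤ 1 := by
  have h1 : (P A).toReal ≤ 1 := by
    have := prob_le_one (μ := P) (s := A)
    simpa using ENNReal.toReal_mono (by simp) this
  have h2 : 0 ≤ (Q A).toReal := ENNReal.toReal_nonneg
  linarith

lemma my_tvDist_le_one {P Q : Measure ℝ} [IsProbabilityMeasure P] [IsProbabilityMeasure Q] :
    tvDist P Q ≤ 1 :=
  ciSup_le fun A => my_term_le_one A.1

lemma my_le_tvDist {P Q : Measure ℝ} [IsProbabilityMeasure P] [IsProbabilityMeasure Q]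
    (A : Set ℝ) (hA : MeasurableSet A) :
    ((P A).toReal - (Q A).toReal) ≤ tvDist P Q := by
  refine le_ciSup (f := fun A : {A : Set ℝ // MeasurableSet A} => ((P A).toReal - (Q A).toReal))
    ⟨1, ?_⟩ ⟨A, hA⟩
  rintro x ⟨B, rfl⟩
  exact my_term_le_one B.1

lemma my_gaussian_map (a s : ℝ) (hs : 0 < s) :
    ProbabilityTheory.gaussianReal a (Real.toNNReal (s^2))
      = (ProbabilityTheory.gaussianReal 0 1).map (fun x => s * x + a) := by
  have h1 : (ProbabilityTheory.gaussianReal 0 1).map (s * ·)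
      = ProbabilityTheory.gaussianReal 0 (Real.toNNReal (s^2)) := by
    rw [ProbabilityTheory.gaussianReal_map_const_mul]
    congr 1
    · simp
    · ext
      simp [Real.coe_toNNReal _ (sq_nonneg s)]
  have h2 := ProbabilityTheory.gaussianReal_map_add_const
    (μ := 0) (v := Real.toNNReal (s^2)) a
  rw [← h1, Measure.map_map (by fun_prop) (by fun_prop)] at h2
  simp only [zero_add] at h2
  rw [← h2]
  rfl

lemma my_std_limit_nat :
    Tendsto (fun m : ℕ => ((ProbabilityTheory.gaussianReal 0 1 : Measure ℝ)
      (Metric.closedBall 0 (m:ℝ))).toReal) atTop (nhds 1) := by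
  have hmono : Monotone (fun m : ℕ => Metric.closedBall (0:ℝ) (m:ℝ)) := fun i j hij =>
    Metric.closedBall_subset_closedBall (by exact_mod_cast hij)
  have h := tendsto_measure_iUnion_atTop (μ := (ProbabilityTheory.gaussianReal 0 1 : Measure ℝ))
    hmono
  have huniv : ⋃ m : ℕ, Metric.closedBall (0:ℝ) (m:ℝ) = Set.univ := by
    ext x
    simp only [Set.mem_iUnion, Metric.mem_closedBall, Real.dist_eq, sub_zero, Set.mem_univ,
      iff_true]
    obtain ⟨m, hm⟩ := exists_nat_ge |x|
    exact ⟨m, hm⟩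
  rw [huniv, measure_univ] at h
  have := (ENNReal.tendsto_toReal (by simp : (1:ENNReal) ≠ ⊤)).comp h
  exact this

lemma my_std_mono : Monotone (fun k : ℝ =>
    ((ProbabilityTheory.gaussianReal 0 1 : Measure ℝ) (Metric.closedBall 0 k)).toReal) := by
  intro i j hij
  exact ENNReal.toReal_mono (measure_ne_top _ _)
    (measure_mono (Metric.closedBall_subset_closedBall hij))

lemma my_std_limit_real {k : ℕ → ℝ} (hk : Tendsto k atTop atTop) :
    Tendsto (fun n => ((ProbabilityTheory.gaussianReal 0 1 : Measure ℝ)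
      (Metric.closedBall 0 (k n))).toReal) atTop (nhds 1) := by
  rw [tendsto_order]
  constructor
  · intro c hc
    have := (my_std_limit_nat.eventually (eventually_gt_nhds hc)).exists
    obtain ⟨m, hm⟩ := this
    filter_upwards [hk.eventually_ge_atTop (m:ℝ)] with n hn
    exact lt_of_lt_of_le hm (my_std_mono hn)
  · intro c hc
    filter_upwards with n
    refine lt_of_le_of_lt ?_ hc
    have := prob_le_one (μ := (ProbabilityTheory.gaussianReal 0 1 : Measure ℝ))
      (s := Metric.closedBall 0 (k n))
    simpa using ENNReal.toReal_mono (by simp) this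

lemma my_gauss_ball_le (b t : ℝ) (ht : 0 < t) (c r : ℝ) (hr : 0 ≤ r) :
    ((ProbabilityTheory.gaussianReal b (Real.toNNReal (t^2)))
      (Metric.closedBall c r)).toReal ≤ t⁻¹ * (2 * r) := by
  have hv : Real.toNNReal (t^2) ≠ 0 := by
    rw [← pos_iff_ne_zero, Real.toNNReal_pos]
    positivity
  rw [ProbabilityTheory.gaussianReal_apply_eq_integral _ hv,
    ENNReal.toReal_ofReal (setIntegral_nonneg measurableSet_closedBall
      (fun x _ => ProbabilityTheory.gaussianPDFReal_nonneg _ _ _))]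
  have hvol : volume (Metric.closedBall c r) < ⊤ := by
    rw [Real.volume_closedBall]; exact ENNReal.ofReal_lt_top
  have hle : ∀ x ∈ Metric.closedBall c r,
      ‖ProbabilityTheory.gaussianPDFReal b (Real.toNNReal (t^2)) x‖ ≤ t⁻¹ := by
    intro x _
    rw [Real.norm_of_nonneg (ProbabilityTheory.gaussianPDFReal_nonneg _ _ _),
      ProbabilityTheory.gaussianPDFReal]
    have hcoe : ((Real.toNNReal (t^2) : NNReal) : ℝ) = t^2 :=
      Real.coe_toNNReal _ (sq_nonneg t)
    rw [hcoe]
    have h1 : Real.exp (-(x - b) ^ 2 / (2 * t ^ 2)) ≤ 1 := by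
      rw [Real.exp_le_one_iff]
      apply div_nonpos_of_nonpos_of_nonneg
      · simp [sq_nonneg]
      · positivity
    have h2 : (Real.sqrt (2 * Real.pi * t ^ 2))⁻¹ ≤ t⁻¹ := by
      apply inv_anti₀ ht
      have : t = Real.sqrt (t^2) := (Real.sqrt_sq ht.le).symm
      rw [this]
      apply Real.sqrt_le_sqrt
      nlinarith [Real.pi_gt_three, sq_nonneg t]
    calc (Real.sqrt (2 * Real.pi * t ^ 2))⁻¹ * Real.exp (-(x - b) ^ 2 / (2 * t ^ 2))
        ≤ (Real.sqrt (2 * Real.pi * t ^ 2))⁻¹ * 1 := by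
          apply mul_le_mul_of_nonneg_left h1 (by positivity)
      _ ≤ t⁻¹ := by rw [mul_one]; exact h2
  have := norm_setIntegral_le_of_norm_le_const (μ := volume) hvol hle
  refine le_trans (le_trans (le_abs_self _) this) ?_
  rw [measureReal_def, Real.volume_closedBall, ENNReal.toReal_ofReal (by linarith)]

theorem stmt11 (σ τ a b : ℕ → ℝ)
    (hσ : ∀ n, 0 < σ n) (hτ : ∀ n, 0 < τ n)
    (hratio : Tendsto (fun n => (τ n) ^ 2 / (σ n) ^ 2) atTop atTop) :
    Tendsto (fun n =>
      tvDist (ProbabilityTheory.gaussianReal (a n) (Real.toNNReal ((σ n) ^ 2)))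
             (ProbabilityTheory.gaussianReal (b n) (Real.toNNReal ((τ n) ^ 2))))
      atTop (nhds 1) := by
  set k : ℕ → ℝ := fun n => Real.sqrt (τ n / σ n) with hk_def
  have hkpos : ∀ n, 0 < k n := fun n => Real.sqrt_pos.2 (div_pos (hτ n) (hσ n))
  have hdiv : Tendsto (fun n => τ n / σ n) atTop atTop := by
    have h1 : Tendsto (fun n => Real.sqrt ((τ n)^2 / (σ n)^2)) atTop atTop :=
      my_sqrt_atTop.comp hratio
    refine h1.congr fun n => ?_
    rw [← div_pow, Real.sqrt_sq (div_nonneg (hτ n).le (hσ n).le)]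
  have hk : Tendsto k atTop atTop := my_sqrt_atTop.comp hdiv
  set A : ℕ → Set ℝ := fun n => Metric.closedBall (a n) (k n * σ n) with hA_def
  set P : ℕ → Measure ℝ := fun n =>
    ProbabilityTheory.gaussianReal (a n) (Real.toNNReal ((σ n) ^ 2)) with hP_def
  set Q : ℕ → Measure ℝ := fun n =>
    ProbabilityTheory.gaussianReal (b n) (Real.toNNReal ((τ n) ^ 2)) with hQ_def
  have hPA : ∀ n, P n (A n)
      = (ProbabilityTheory.gaussianReal 0 1 : Measure ℝ) (Metric.closedBall 0 (k n)) := by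
    intro n
    rw [hP_def]
    simp only
    rw [my_gaussian_map (a n) (σ n) (hσ n),
      Measure.map_apply (by fun_prop) measurableSet_closedBall]
    congr 1
    ext x
    simp only [hA_def, Set.mem_preimage, Metric.mem_closedBall, Real.dist_eq, add_sub_cancel_right,
      abs_mul, abs_of_pos (hσ n), sub_zero]
    rw [mul_comm (σ n) |x|]
    exact mul_le_mul_iff_of_pos_right (hσ n)
  have hPlim : Tendsto (fun n => (P n (A n)).toReal) atTop (nhds 1) := by
    simp only [hPA]
    exact my_std_limit_real hk
  have hQlim : Tendsto (fun n => (Q n (A n)).toReal) atTop (nhds 0) := by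
    have hbound : ∀ n, (Q n (A n)).toReal ≤ 2 * (k n)⁻¹ := by
      intro n
      have h := my_gauss_ball_le (b n) (τ n) (hτ n) (a n)
        (k n * σ n) (mul_nonneg (hkpos n).le (hσ n).le)
      refine le_trans h (le_of_eq ?_)
      have hτeq : τ n = (k n)^2 * σ n := by
        rw [hk_def]
        simp only
        rw [Real.sq_sqrt (div_nonneg (hτ n).le (hσ n).le),
          div_mul_cancel₀ _ (hσ n).ne']
      rw [hτeq]
      have hk0 : k n ≠ 0 := (hkpos n).ne'
      have hs0 : σ n ≠ 0 := (hσ n).ne'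
      field_simp
    have h2 : Tendsto (fun n => 2 * (k n)⁻¹) atTop (nhds 0) := by
      have := (hk.inv_tendsto_atTop).const_mul 2
      simpa using this
    exact tendsto_of_tendsto_of_tendsto_of_le_of_le tendsto_const_nhds h2
      (fun n => ENNReal.toReal_nonneg) hbound
  have hL : Tendsto (fun n => (P n (A n)).toReal - (Q n (A n)).toReal) atTop (nhds 1) := by
    have := hPlim.sub hQlim
    simpa using this
  refine tendsto_of_tendsto_of_tendsto_of_le_of_le hL tendsto_const_nhds
    (fun n => ?_) (fun n => my_tvDist_le_one)
  exact my_le_tvDist (A n) measurableSet_closedBall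
end
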